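/- Fix ℓ > 0 and let g(x) = (x²/(2ℓ²)) exp(−x²/(2ℓ²)), so that g''(x) = ℓ^{−2} e^{−x²/(2ℓ²)} (1 + x⁴/(2ℓ⁴) − 5x²/(2ℓ²)). Set ℓ₀ := (1/2)√(2/(5+√17)) and ℓ₁ := (1/2)√(2/(5−√17)). Then: if ℓ ≤ ℓ₀, ∫_{1/2}^{∞} |g''(x)| dx ≤ (e^{−1/(8ℓ²)}/(2ℓ²))(1/(8ℓ²) − 1); if ℓ₀ < ℓ < ℓ₁, ∫_{1/2}^{∞} |g''(x)| dx ≤ (e^{−1/(8ℓ²)}/(2ℓ²))(1 − 1/(8ℓ²)) + 3/(5ℓ); and if ℓ ≥ ℓ₁, ∫_{1/2}^{∞} |g''(x)| dx ≤ (e^{−1/(8ℓ²)}/(2ℓ²))(1/(8ℓ²) − 1) + 3/(2ℓ). -/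

import Mathlib

/-!
Write `g(x) = G(x/ℓ)` with `G(t) = (t²/2) e^{-t²/2}`. The substitution `x = ℓ t` turns the integral
into `ℓ⁻¹ ∫_{1/(2ℓ)}^∞ |G''|`, and `G''(t) = e^{-t²/2} (t² - t₁²)(t² - t₂²)/2` has constant sign
between its positive zeros `t₁ < t₂`. On each such piece `∫ |G''|` is the variation of `G'`, and
`G' → 0` at infinity, so the integral is an explicit combination of `G'(1/(2ℓ))`, `G'(t₁)` and
`G'(t₂)`; the thresholds are `ℓ₀ = 1/(2 t₂)` and `ℓ₁ = 1/(2 t₁)`. The constants `3/5` and `3/2`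
come from the numerical bounds `G'(t₁) ≤ 9/20` and `G'(t₂) ≥ -3/10`.
-/

open MeasureTheory Real

noncomputable section

/-- The threshold `ℓ₀ = (1/2)√(2/(5 + √17))`. -/
def ellZero : ℝ := (1/2) * Real.sqrt (2 / (5 + Real.sqrt 17))

/-- The threshold `ℓ₁ = (1/2)√(2/(5 − √17))`. -/
def ellOne : ℝ := (1/2) * Real.sqrt (2 / (5 - Real.sqrt 17))

open Filter Set Topology

section AbsDeriv

variable {f f' : ℝ → ℝ} {a b l : ℝ}

theorem intervalIntegral_abs_deriv_of_nonneg (hab : a ≤ b)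
    (hderiv : ∀ x ∈ Icc a b, HasDerivAt f (f' x) x) (hpos : ∀ x ∈ Icc a b, 0 ≤ f' x) :
    ∫ x in a..b, |f' x| = f b - f a := by
  rw [← uIcc_of_le hab] at hderiv hpos
  have hint : IntervalIntegrable f' volume a b :=
    intervalIntegral.intervalIntegrable_deriv_of_nonneg
      (fun x hx => (hderiv x hx).continuousAt.continuousWithinAt)
      (fun x hx => hderiv x (Ioo_subset_Icc_self hx))
      (fun x hx => hpos x (Ioo_subset_Icc_self hx))
  rw [intervalIntegral.integral_congr fun x hx => abs_of_nonneg (hpos x hx)]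
  exact intervalIntegral.integral_eq_sub_of_hasDerivAt hderiv hint

theorem intervalIntegral_abs_deriv_of_nonpos (hab : a ≤ b)
    (hderiv : ∀ x ∈ Icc a b, HasDerivAt f (f' x) x) (hneg : ∀ x ∈ Icc a b, f' x ≤ 0) :
    ∫ x in a..b, |f' x| = f a - f b := by
  have := intervalIntegral_abs_deriv_of_nonneg hab (fun x hx => (hderiv x hx).neg)
    (fun x hx => neg_nonneg.2 (hneg x hx))
  simp only [abs_neg, Pi.neg_apply] at this
  linarith

theorem integral_Ioi_abs_deriv_of_nonneg (hderiv : ∀ x ∈ Ici a, HasDerivAt f (f' x) x)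
    (hpos : ∀ x ∈ Ioi a, 0 ≤ f' x) (hf : Tendsto f atTop (𝓝 l)) :
    ∫ x in Ioi a, |f' x| = l - f a := by
  rw [setIntegral_congr_fun measurableSet_Ioi fun x hx => abs_of_nonneg (hpos x hx)]
  exact integral_Ioi_of_hasDerivAt_of_nonneg' hderiv hpos hf

end AbsDeriv

theorem tendsto_pow_mul_exp_neg_sq_div_two (n : ℕ) :
    Tendsto (fun t : ℝ => t ^ n * exp (-t ^ 2 / 2)) atTop (𝓝 0) := by
  refine ((tendsto_rpow_abs_mul_exp_neg_mul_sq_cocompact one_half_pos n).mono_left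
    atTop_le_cocompact).congr' ?_
  filter_upwards [eventually_ge_atTop 0] with t ht
  rw [abs_of_nonneg ht, rpow_natCast]
  ring_nf

/-- `G'` for `G t = (t²/2) e^{-t²/2}`, the case `ℓ = 1` of `g`. -/
def derGaussDeriv (t : ℝ) : ℝ := exp (-t ^ 2 / 2) * (t - t ^ 3 / 2)

def derGaussDeriv2 (t : ℝ) : ℝ := exp (-t ^ 2 / 2) * (1 + t ^ 4 / 2 - 5 * t ^ 2 / 2)

theorem hasDerivAt_derGaussDeriv (t : ℝ) : HasDerivAt derGaussDeriv (derGaussDeriv2 t) t := by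
  have hexp : HasDerivAt (fun t => exp (-t ^ 2 / 2)) (exp (-t ^ 2 / 2) * -t) t := by
    convert ((hasDerivAt_pow 2 t).fun_neg.div_const 2).exp using 1
    ring
  have hpoly : HasDerivAt (fun t => t - t ^ 3 / 2) (1 - 3 * t ^ 2 / 2) t := by
    refine ((hasDerivAt_id' t).fun_sub ((hasDerivAt_pow 3 t).div_const 2)).congr_deriv ?_
    norm_num
  refine (hexp.mul hpoly).congr_deriv ?_
  unfold derGaussDeriv2
  ring

theorem continuous_derGaussDeriv2 : Continuous derGaussDeriv2 := by
  unfold derGaussDeriv2; fun_prop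

theorem tendsto_derGaussDeriv_atTop : Tendsto derGaussDeriv atTop (𝓝 0) := by
  have h := (tendsto_pow_mul_exp_neg_sq_div_two 1).sub
    ((tendsto_pow_mul_exp_neg_sq_div_two 3).div_const 2)
  rw [zero_div, sub_zero] at h
  refine h.congr fun t => ?_
  simp only [derGaussDeriv]
  ring

def rootLo : ℝ := √((5 - √17) / 2)

def rootHi : ℝ := √((5 + √17) / 2)

theorem sqrt_seventeen_lt : √17 < 4.1232 := (sqrt_lt' (by norm_num)).2 (by norm_num)

theorem lt_sqrt_seventeen : 4.1231 < √17 := (lt_sqrt (by norm_num)).2 (by norm_num)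

theorem rootLo_sq : rootLo ^ 2 = (5 - √17) / 2 :=
  sq_sqrt (by linarith [sqrt_seventeen_lt])

theorem rootHi_sq : rootHi ^ 2 = (5 + √17) / 2 :=
  sq_sqrt (by positivity)

theorem rootLo_pos : 0 < rootLo := sqrt_pos.2 (by linarith [sqrt_seventeen_lt])

theorem rootHi_pos : 0 < rootHi := sqrt_pos.2 (by positivity)

theorem rootLo_le_rootHi : rootLo ≤ rootHi := sqrt_le_sqrt (by linarith [sqrt_nonneg 17])

theorem derGaussDeriv2_eq (t : ℝ) :
    derGaussDeriv2 t = exp (-t ^ 2 / 2) * ((t ^ 2 - rootLo ^ 2) * (t ^ 2 - rootHi ^ 2) / 2) := by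
  rw [derGaussDeriv2, rootLo_sq, rootHi_sq]
  linear_combination exp (-t ^ 2 / 2) / 8 * sq_sqrt (show (0 : ℝ) ≤ 17 by norm_num)

theorem derGaussDeriv2_nonneg_of_le_rootLo {t : ℝ} (h₀ : 0 ≤ t) (h : t ≤ rootLo) :
    0 ≤ derGaussDeriv2 t := by
  have hlo : t ^ 2 ≤ rootLo ^ 2 := pow_le_pow_left₀ h₀ h 2
  have hhi : rootLo ^ 2 ≤ rootHi ^ 2 := pow_le_pow_left₀ rootLo_pos.le rootLo_le_rootHi 2
  rw [derGaussDeriv2_eq]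
  have : 0 ≤ (t ^ 2 - rootLo ^ 2) * (t ^ 2 - rootHi ^ 2) := by nlinarith
  positivity

theorem derGaussDeriv2_nonpos_of_mem_Icc {t : ℝ} (h : t ∈ Icc rootLo rootHi) :
    derGaussDeriv2 t ≤ 0 := by
  have hlo : rootLo ^ 2 ≤ t ^ 2 := pow_le_pow_left₀ rootLo_pos.le h.1 2
  have hhi : t ^ 2 ≤ rootHi ^ 2 := pow_le_pow_left₀ (rootLo_pos.le.trans h.1) h.2 2
  rw [derGaussDeriv2_eq]
  have : (t ^ 2 - rootLo ^ 2) * (t ^ 2 - rootHi ^ 2) ≤ 0 := by nlinarith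
  exact mul_nonpos_of_nonneg_of_nonpos (exp_pos _).le (by linarith)

theorem derGaussDeriv2_nonneg_of_rootHi_le {t : ℝ} (h : rootHi ≤ t) :
    0 ≤ derGaussDeriv2 t := by
  have hhi : rootHi ^ 2 ≤ t ^ 2 := pow_le_pow_left₀ rootHi_pos.le h 2
  have hlo : rootLo ^ 2 ≤ rootHi ^ 2 := pow_le_pow_left₀ rootLo_pos.le rootLo_le_rootHi 2
  rw [derGaussDeriv2_eq]
  have : 0 ≤ (t ^ 2 - rootLo ^ 2) * (t ^ 2 - rootHi ^ 2) := by nlinarith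
  positivity

theorem integrableOn_Ioi_derGaussDeriv2 (a : ℝ) : IntegrableOn derGaussDeriv2 (Ioi a) := by
  have htail : IntegrableOn derGaussDeriv2 (Ioi rootHi) :=
    integrableOn_Ioi_deriv_of_nonneg' (fun t _ => hasDerivAt_derGaussDeriv t)
      (fun t ht => derGaussDeriv2_nonneg_of_rootHi_le ht.le) tendsto_derGaussDeriv_atTop
  refine ((continuous_derGaussDeriv2.integrableOn_Icc (a := a) (b := rootHi)).union htail).mono_set
    fun t ht => ?_
  rcases le_or_gt t rootHi with h | h
  exacts [Or.inl ⟨ht.le, h⟩, Or.inr h]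

theorem integral_Ioi_abs_derGaussDeriv2_of_rootHi_le {s : ℝ} (hs : rootHi ≤ s) :
    ∫ t in Ioi s, |derGaussDeriv2 t| = -derGaussDeriv s := by
  rw [integral_Ioi_abs_deriv_of_nonneg (fun t _ => hasDerivAt_derGaussDeriv t)
    (fun t ht => derGaussDeriv2_nonneg_of_rootHi_le (hs.trans ht.le))
    tendsto_derGaussDeriv_atTop, zero_sub]

theorem integral_Ioi_abs_derGaussDeriv2_of_mem_Icc {s : ℝ} (hs : s ∈ Icc rootLo rootHi) :
    ∫ t in Ioi s, |derGaussDeriv2 t| = derGaussDeriv s - 2 * derGaussDeriv rootHi := by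
  rw [← intervalIntegral.integral_interval_add_Ioi'
      (continuous_derGaussDeriv2.abs.intervalIntegrable _ _)
      (integrableOn_Ioi_derGaussDeriv2 rootHi).abs,
    intervalIntegral_abs_deriv_of_nonpos hs.2 (fun t _ => hasDerivAt_derGaussDeriv t)
      (fun t ht => derGaussDeriv2_nonpos_of_mem_Icc ⟨hs.1.trans ht.1, ht.2⟩),
    integral_Ioi_abs_derGaussDeriv2_of_rootHi_le le_rfl]
  ring

theorem integral_Ioi_abs_derGaussDeriv2_of_le_rootLo {s : ℝ} (h₀ : 0 ≤ s) (hs : s ≤ rootLo) :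
    ∫ t in Ioi s, |derGaussDeriv2 t| =
      2 * derGaussDeriv rootLo - 2 * derGaussDeriv rootHi - derGaussDeriv s := by
  rw [← intervalIntegral.integral_interval_add_Ioi'
      (continuous_derGaussDeriv2.abs.intervalIntegrable _ _)
      (integrableOn_Ioi_derGaussDeriv2 rootLo).abs,
    intervalIntegral_abs_deriv_of_nonneg hs (fun t _ => hasDerivAt_derGaussDeriv t)
      (fun t ht => derGaussDeriv2_nonneg_of_le_rootLo (h₀.trans ht.1) ht.2),
    integral_Ioi_abs_derGaussDeriv2_of_mem_Icc ⟨le_rfl, rootLo_le_rootHi⟩]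
  ring

theorem derGaussDeriv_rootLo_le : derGaussDeriv rootLo ≤ 9 / 20 := by
  have hc := rootLo_sq
  have hs := lt_sqrt_seventeen
  have hr : rootLo ≤ 0.6622 := by nlinarith [rootLo_pos, sqrt_seventeen_lt]
  have hE : exp (-rootLo ^ 2 / 2) ≤ 0.8203 := by
    have h : 1.2192 ≤ exp (rootLo ^ 2 / 2) := by
      linarith [add_one_le_exp (rootLo ^ 2 / 2), sqrt_seventeen_lt]
    rw [neg_div, exp_neg]
    exact (inv_anti₀ (by norm_num) h).trans (by norm_num)
  have hfac : rootLo - rootLo ^ 3 / 2 ≤ 0.5171 := by nlinarith [rootLo_pos]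
  have hfac₀ : 0 ≤ rootLo - rootLo ^ 3 / 2 := by nlinarith [rootLo_pos]
  calc derGaussDeriv rootLo ≤ 0.8203 * 0.5171 :=
        mul_le_mul hE hfac hfac₀ (by norm_num)
    _ ≤ 9 / 20 := by norm_num

theorem neg_three_tenths_le_derGaussDeriv_rootHi : -(3 / 10) ≤ derGaussDeriv rootHi := by
  have hc := rootHi_sq
  have hs := sqrt_seventeen_lt
  have hr : rootHi ≤ 2.1359 := by nlinarith [rootHi_pos, lt_sqrt_seventeen]
  have hE : exp (-rootHi ^ 2 / 2) ≤ 0.1064 := by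
    have h : 9.4 ≤ exp (rootHi ^ 2 / 2) := by
      have hsplit : exp (rootHi ^ 2 / 2) = exp 1 * exp 1 * exp (rootHi ^ 2 / 2 - 2) := by
        rw [← exp_add, ← exp_add]; ring_nf
      have he := exp_one_gt_d9
      have htail := add_one_le_exp (rootHi ^ 2 / 2 - 2)
      rw [hsplit]
      nlinarith [exp_pos 1, exp_pos (rootHi ^ 2 / 2 - 2), lt_sqrt_seventeen]
    rw [neg_div, exp_neg]
    exact (inv_anti₀ (by norm_num) h).trans (by norm_num)
  have hfac : -2.7357 ≤ rootHi - rootHi ^ 3 / 2 := by nlinarith [rootHi_pos]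
  have hfac₀ : rootHi - rootHi ^ 3 / 2 ≤ 0 := by nlinarith [rootHi_pos, lt_sqrt_seventeen]
  calc -(3 / 10) ≤ 0.1064 * -2.7357 := by norm_num
    _ ≤ 0.1064 * (rootHi - rootHi ^ 3 / 2) := by gcongr
    _ ≤ derGaussDeriv rootHi := mul_le_mul_of_nonpos_right hE hfac₀

theorem ellZero_eq : ellZero = 1 / 2 / rootHi := by
  rw [ellZero, rootHi, ← inv_div (5 + √17) 2, sqrt_inv]
  ring

theorem ellOne_eq : ellOne = 1 / 2 / rootLo := by
  rw [ellOne, rootLo, ← inv_div (5 - √17) 2, sqrt_inv]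
  ring

theorem integral_Ioi_abs_scaled_derGaussDeriv2 {ℓ : ℝ} (hℓ : 0 < ℓ) (a : ℝ) :
    ∫ x in Ioi a, |(1 / ℓ ^ 2) * exp (-x ^ 2 / (2 * ℓ ^ 2)) *
        (1 + x ^ 4 / (2 * ℓ ^ 4) - 5 * x ^ 2 / (2 * ℓ ^ 2))| =
      (∫ t in Ioi (a / ℓ), |derGaussDeriv2 t|) / ℓ := by
  have hscale : ∀ x : ℝ, (1 / ℓ ^ 2) * exp (-x ^ 2 / (2 * ℓ ^ 2)) *
      (1 + x ^ 4 / (2 * ℓ ^ 4) - 5 * x ^ 2 / (2 * ℓ ^ 2)) = derGaussDeriv2 (ℓ⁻¹ * x) / ℓ ^ 2 := by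
    intro x
    unfold derGaussDeriv2
    field_simp
  simp_rw [hscale, abs_div, abs_of_pos (pow_pos hℓ 2)]
  rw [integral_div, integral_comp_mul_left_Ioi (fun t => |derGaussDeriv2 t|) a (inv_pos.2 hℓ),
    smul_eq_mul, inv_inv, inv_mul_eq_div]
  field_simp

theorem derGaussDeriv_half_div {ℓ : ℝ} (hℓ : ℓ ≠ 0) :
    derGaussDeriv (1 / 2 / ℓ) / ℓ =
      exp (-(1 / (8 * ℓ ^ 2))) / (2 * ℓ ^ 2) * (1 - 1 / (8 * ℓ ^ 2)) := by
  rw [derGaussDeriv, show -(1 / 2 / ℓ) ^ 2 / 2 = -(1 / (8 * ℓ ^ 2)) by field_simp; ring]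
  field_simp
  ring

/-- Estimates on `∫_{1/2}^{∞} |g''(x)| dx` for `g(x) = (x²/(2ℓ²)) e^{−x²/(2ℓ²)}`, with
`g''(x) = ℓ^{−2} e^{−x²/(2ℓ²)} (1 + x⁴/(2ℓ⁴) − 5x²/(2ℓ²))`. -/
theorem derGauss_second_derivative_tail_integral (ℓ : ℝ) (hℓ : 0 < ℓ) :
    (ℓ ≤ ellZero →
      (∫ x in Set.Ioi ((1:ℝ)/2),
          |(1 / ℓ ^ 2) * Real.exp (-x ^ 2 / (2 * ℓ ^ 2)) *
            (1 + x ^ 4 / (2 * ℓ ^ 4) - 5 * x ^ 2 / (2 * ℓ ^ 2))|) ≤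
        (Real.exp (-(1 / (8 * ℓ ^ 2))) / (2 * ℓ ^ 2)) * (1 / (8 * ℓ ^ 2) - 1)) ∧
    (ellZero < ℓ → ℓ < ellOne →
      (∫ x in Set.Ioi ((1:ℝ)/2),
          |(1 / ℓ ^ 2) * Real.exp (-x ^ 2 / (2 * ℓ ^ 2)) *
            (1 + x ^ 4 / (2 * ℓ ^ 4) - 5 * x ^ 2 / (2 * ℓ ^ 2))|) ≤
        (Real.exp (-(1 / (8 * ℓ ^ 2))) / (2 * ℓ ^ 2)) * (1 - 1 / (8 * ℓ ^ 2)) + 3 / (5 * ℓ)) ∧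
    (ellOne ≤ ℓ →
      (∫ x in Set.Ioi ((1:ℝ)/2),
          |(1 / ℓ ^ 2) * Real.exp (-x ^ 2 / (2 * ℓ ^ 2)) *
            (1 + x ^ 4 / (2 * ℓ ^ 4) - 5 * x ^ 2 / (2 * ℓ ^ 2))|) ≤
        (Real.exp (-(1 / (8 * ℓ ^ 2))) / (2 * ℓ ^ 2)) * (1 / (8 * ℓ ^ 2) - 1) + 3 / (2 * ℓ)) := by
  rw [integral_Ioi_abs_scaled_derGaussDeriv2 hℓ, ellZero_eq, ellOne_eq]
  have hs : 0 < 1 / 2 / ℓ := by positivity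
  have hval := derGaussDeriv_half_div hℓ.ne'
  refine ⟨fun h => ?_, fun h₀ h₁ => ?_, fun h => ?_⟩
  · rw [integral_Ioi_abs_derGaussDeriv2_of_rootHi_le ((le_div_comm₀ hℓ rootHi_pos).1 h),
      neg_div, hval]
    linarith
  · rw [integral_Ioi_abs_derGaussDeriv2_of_mem_Icc
      ⟨((lt_div_comm₀ hℓ rootLo_pos).1 h₁).le, ((div_lt_comm₀ rootHi_pos hℓ).1 h₀).le⟩]
    calc _ ≤ (derGaussDeriv (1 / 2 / ℓ) + 3 / 5) / ℓ := by
          gcongr; linarith [neg_three_tenths_le_derGaussDeriv_rootHi]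
      _ = _ := by rw [add_div, hval]; ring
  · rw [integral_Ioi_abs_derGaussDeriv2_of_le_rootLo hs.le ((div_le_comm₀ rootLo_pos hℓ).1 h)]
    calc _ ≤ (3 / 2 - derGaussDeriv (1 / 2 / ℓ)) / ℓ := by
          gcongr; linarith [derGaussDeriv_rootLo_le, neg_three_tenths_le_derGaussDeriv_rootHi]
      _ = _ := by rw [sub_div, hval]; ring
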